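/- Let σ be the density matrix of a single-qubit pure state with σ₀₀ = σ₁₁ = 1/2. Then the fidelity of 𝒯_p^n(σ) with the noiseless target 𝒯^n(σ) = T^n σ (T†)^n equals Tr[𝒯_p^n(σ) 𝒯^n(σ)] = 1/2 + (1/2)(1−p)^n. -/
import Mathlib


open Matrix Complex

noncomputable section

def Tgate : Matrix (Fin 2) (Fin 2) ℂ := !![1, 0; 0, Complex.exp (Complex.I * Real.pi / 4)]

def Zgate : Matrix (Fin 2) (Fin 2) ℂ := !![1, 0; 0, -1]

/-- The noiseless T-gate channel. -/
def Tch (σ : Matrix (Fin 2) (Fin 2) ℂ) : Matrix (Fin 2) (Fin 2) ℂ := Tgate * σ * Tgateᴴ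

/-- The single-qubit dephasing channel. -/
def Dz (σ : Matrix (Fin 2) (Fin 2) ℂ) : Matrix (Fin 2) (Fin 2) ℂ :=
  ((1 : ℂ) / 2) • (σ + Zgate * σ * Zgate)

/-- The noisy T-gate channel. -/
def Tp (p : ℝ) (σ : Matrix (Fin 2) (Fin 2) ℂ) : Matrix (Fin 2) (Fin 2) ℂ :=
  ((1 - p : ℝ) : ℂ) • Tch σ + (p : ℂ) • Dz σ


abbrev cc : ℂ := Complex.exp (Complex.I * Real.pi / 4)

lemma cc_conj : (starRingEnd ℂ) cc * cc = 1 := by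
  rw [← Complex.exp_conj, ← Complex.exp_add]
  have h : (starRingEnd ℂ) (Complex.I * (Real.pi : ℂ) / 4) = -(Complex.I * Real.pi / 4) := by
    rw [map_div₀, _root_.map_mul, Complex.conj_I, Complex.conj_ofReal, map_ofNat]
    ring
  rw [h]
  simp

lemma mul_form (u x y : ℂ) (hu : (starRingEnd ℂ) u * u = 1) :
    !![(1:ℂ), 0; 0, u] * !![1/2, x; y, 1/2] * !![(1:ℂ), 0; 0, u]ᴴ =
      !![1/2, (starRingEnd ℂ) u * x; u * y, 1/2] := by
  ext i j
  fin_cases i <;> fin_cases j <;>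
    simp [mul_apply, Fin.sum_univ_two, conjTranspose_apply, RCLike.star_def] <;>
    first
      | ring1
      | linear_combination (1/2 : ℂ) * hu

lemma Tch_form (x y : ℂ) :
    Tch !![1/2, x; y, 1/2] = !![1/2, (starRingEnd ℂ) cc * x; cc * y, 1/2] := by
  rw [Tch, show Tgate = !![(1:ℂ), 0; 0, cc] from rfl]
  exact mul_form cc x y cc_conj

lemma Tp_form (p : ℝ) (x y : ℂ) :
    Tp p !![1/2, x; y, 1/2] =
      !![1/2, (((1-p:ℝ):ℂ) * (starRingEnd ℂ) cc) * x; (((1-p:ℝ):ℂ) * cc) * y, 1/2] := by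
  rw [Tp, Tch_form]
  ext i j
  fin_cases i <;> fin_cases j <;>
    simp [Dz, Zgate, mul_apply, Fin.sum_univ_two] <;> ring

lemma Tch_iter (x y : ℂ) (n : ℕ) :
    Tch^[n] !![1/2, x; y, 1/2] = !![1/2, ((starRingEnd ℂ) cc)^n * x; cc^n * y, 1/2] := by
  induction n with
  | zero => simp
  | succ n ih =>
      rw [Function.iterate_succ_apply', ih, Tch_form]
      ext i j
      fin_cases i <;> fin_cases j <;> simp <;> ring

lemma Tp_iter (p : ℝ) (x y : ℂ) (n : ℕ) :
    (Tp p)^[n] !![1/2, x; y, 1/2] =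
      !![1/2, (((1-p:ℝ):ℂ) * (starRingEnd ℂ) cc)^n * x; (((1-p:ℝ):ℂ) * cc)^n * y, 1/2] := by
  induction n with
  | zero => simp
  | succ n ih =>
      rw [Function.iterate_succ_apply', ih, Tp_form]
      ext i j
      fin_cases i <;> fin_cases j <;> simp <;> ring

lemma trace_form {n : ℕ} (u v : ℂ) (x y : ℂ) :
    (!![1/2, (v * (starRingEnd ℂ) u)^n * x; (v * u)^n * y, 1/2] *
      !![1/2, ((starRingEnd ℂ) u)^n * x; u^n * y, 1/2]).trace
    = 1/4 + 1/4 + (v * (starRingEnd ℂ) u)^n * x * (u^n * y) +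
        (v * u)^n * y * (((starRingEnd ℂ) u)^n * x) := by
  simp [trace, Matrix.diag, mul_apply, Fin.sum_univ_two]
  ring

/-- for a pure state `σ` with equal diagonal entries `1/2`, the fidelity of
`𝒯_p^n(σ)` with the noiseless target `𝒯^n(σ)` equals `1/2 + (1/2)(1−p)^n`. -/
theorem ramsey_fidelity_dephasing (p : ℝ) (hp0 : 0 ≤ p) (hp1 : p ≤ 1) (n : ℕ)
    (σ : Matrix (Fin 2) (Fin 2) ℂ)
    (hpure : σ * σ = σ) (htr : σ.trace = 1) (hherm : σᴴ = σ)
    (h00 : σ 0 0 = 1 / 2) (h11 : σ 1 1 = 1 / 2) :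
    ((Tp p)^[n] σ * Tch^[n] σ).trace = ((1 / 2 + (1 / 2) * (1 - p) ^ n : ℝ) : ℂ) := by
  have hoff : σ 0 1 * σ 1 0 = 1 / 4 := by
    have h := congrFun (congrFun hpure 0) 0
    simp [mul_apply, Fin.sum_univ_two, h00] at h
    linear_combination h
  set x := σ 0 1 with hx
  set y := σ 1 0 with hy
  have hσ : σ = !![1/2, x; y, 1/2] := by
    rw [Matrix.eta_fin_two σ, h00, h11, ← hx, ← hy]
  have key : ((starRingEnd ℂ) cc)^n * cc^n = 1 := by rw [← mul_pow, cc_conj, one_pow]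
  rw [hσ, Tp_iter, Tch_iter, trace_form (n := n) cc ((1-p:ℝ):ℂ) x y,
    mul_pow (((1-p:ℝ)):ℂ) ((starRingEnd ℂ) cc), mul_pow (((1-p:ℝ)):ℂ) cc]
  push_cast
  linear_combination (2*(1-(p:ℂ))^n * ((starRingEnd ℂ) cc)^n * cc^n) * hoff +
    ((1/2)*(1-(p:ℂ))^n) * key

end
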